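/- If I is an ideal on ω admitting an uncountable I-mad family, then c is complemented in c(I) ∩ ℓ∞ if and only if I = Fin. -/

import Mathlib

open Set Filter

/-- An ideal on ω: closed under subsets and finite unions, contains all finite sets, ω ∉ I. -/
def IsIdeal (I : Set (Set ℕ)) : Prop :=
  (∀ A B : Set ℕ, A ∈ I → B ⊆ A → B ∈ I) ∧
  (∀ A ∈ I, ∀ B ∈ I, A ∪ B ∈ I) ∧
  (∀ A : Set ℕ, A.Finite → A ∈ I) ∧
  (Set.univ : Set ℕ) ∉ I

/-- A real sequence is I-convergent to 0. -/
def IConvZero (I : Set (Set ℕ)) (x : ℕ → ℝ) : Prop :=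
  ∀ ε : ℝ, 0 < ε → {n | ε ≤ |x n|} ∈ I

/-- c₀(I) ∩ ℓ∞ : bounded sequences I-convergent to 0 (ℓ∞ = bounded functions ℕ → ℝ, sup norm). -/
def c0I (I : Set (Set ℕ)) : Set (BoundedContinuousFunction ℕ ℝ) :=
  {x | IConvZero I (fun n => x n)}

/-- An I-mad family: I-positive sets, pairwise intersections in I, maximal. -/
def IMad (I : Set (Set ℕ)) (𝒜 : Set (Set ℕ)) : Prop :=
  (∀ A ∈ 𝒜, A ∉ I) ∧
  (∀ A ∈ 𝒜, ∀ B ∈ 𝒜, A ≠ B → A ∩ B ∈ I) ∧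
  (∀ X : Set ℕ, X ∉ I → ∃ A ∈ 𝒜, X ∩ A ∉ I)

/-- The indicator sequence 1_X as an element of ℓ∞. -/
noncomputable def ind (X : Set ℕ) : BoundedContinuousFunction ℕ ℝ :=
  BoundedContinuousFunction.ofNormedAddCommGroupDiscrete (X.indicator 1) 1 (by
    intro n
    by_cases h : n ∈ X <;> simp [Set.indicator_apply, h])

/-- c(I) ∩ ℓ∞, the bounded I-convergent sequences, as a submodule of ℓ∞. -/
def cISub (I : Set (Set ℕ)) (hI : IsIdeal I) :
    Submodule ℝ (BoundedContinuousFunction ℕ ℝ) where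
  carrier := {x | ∃ y : ℝ, ∀ ε : ℝ, 0 < ε → {n | ε ≤ |x n - y|} ∈ I}
  zero_mem' := by
    refine ⟨0, fun ε hε => ?_⟩
    have h : {n : ℕ | ε ≤ |(0 : BoundedContinuousFunction ℕ ℝ) n - 0|} = ∅ := by
      ext n; simp; linarith
    rw [h]
    exact hI.2.2.1 _ Set.finite_empty
  add_mem' := by
    rintro x y ⟨a, ha⟩ ⟨b, hb⟩
    refine ⟨a + b, fun ε hε => ?_⟩
    have h2 : (0:ℝ) < ε / 2 := by linarith
    refine hI.1 _ _ (hI.2.1 _ (ha _ h2) _ (hb _ h2)) ?_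
    intro n hn
    simp only [Set.mem_setOf_eq, BoundedContinuousFunction.coe_add, Pi.add_apply] at hn
    by_contra hc
    simp only [Set.mem_union, Set.mem_setOf_eq, not_or, not_le] at hc
    have : |x n + y n - (a + b)| ≤ |x n - a| + |y n - b| := by
      have : x n + y n - (a + b) = (x n - a) + (y n - b) := by ring
      rw [this]; exact abs_add_le _ _
    linarith [hc.1, hc.2]
  smul_mem' := by
    rintro c x ⟨a, ha⟩
    refine ⟨c * a, fun ε hε => ?_⟩
    have hpos : (0:ℝ) < ε / (|c| + 1) := by positivity
    refine hI.1 _ _ (ha _ hpos) ?_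
    intro n hn
    simp only [Set.mem_setOf_eq, BoundedContinuousFunction.coe_smul, Pi.smul_apply,
      smul_eq_mul] at hn ⊢
    have h1 : |c * x n - c * a| = |c| * |x n - a| := by
      rw [← mul_sub, abs_mul]
    rw [h1] at hn
    have h2 : |c| * |x n - a| ≤ (|c| + 1) * |x n - a| := by
      have := abs_nonneg (x n - a); nlinarith
    have h3 : ε ≤ (|c| + 1) * |x n - a| := le_trans hn h2
    rw [div_le_iff₀ (by positivity : (0:ℝ) < |c| + 1)]
    linarith [h3]
  
/-- A bounded sequence is convergent (in the ordinary sense). -/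
def IsConv (x : BoundedContinuousFunction ℕ ℝ) : Prop :=
  ∃ y : ℝ, Tendsto (fun n => x n) atTop (nhds y)

section Aux

lemma myNotCountable : ¬ Countable (ℕ → Bool) := by
  intro h
  obtain ⟨f⟩ := nonempty_embedding_nat (ℕ → Bool)
  classical
  have hg : Function.Injective (fun (S : Set ℕ) (n : ℕ) => if n ∈ S then true else false) := by
    intro S T h
    ext n
    have := congrFun h n
    by_cases hS : n ∈ S <;> by_cases hT : n ∈ T <;> simp [hS, hT] at this ⊢
  exact Function.cantor_injective (f ∘ fun S : Set ℕ => fun n => if n ∈ S then true else false)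
    (f.injective.comp hg)

/-- prefix-coded sequence -/
noncomputable def mySig (β : ℕ → ℕ) (x : ℕ → Bool) (n : ℕ) : ℕ :=
  β (Encodable.encode (List.ofFn fun i : Fin n => x i))

lemma mySig_eq (β : ℕ → ℕ) (hβ : Function.Injective β) {x y : ℕ → Bool} {n m : ℕ}
    (h : mySig β x n = mySig β y m) :
    n = m ∧ (List.ofFn fun i : Fin n => x i) = (List.ofFn fun i : Fin m => y i) := by
  have h2 := Encodable.encode_injective (hβ h)
  have h3 := congrArg List.length h2
  simp only [List.length_ofFn] at h3
  exact ⟨h3, h2⟩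

lemma mySig_inj (β : ℕ → ℕ) (hβ : Function.Injective β) (x : ℕ → Bool) :
    Function.Injective (mySig β x) := fun n m h => (mySig_eq β hβ h).1

/-- the almost disjoint family member indexed by x, inside range β -/
noncomputable def myA (β : ℕ → ℕ) (x : ℕ → Bool) : Set ℕ := Set.range (mySig β x)

lemma myA_infinite (β : ℕ → ℕ) (hβ : Function.Injective β) (x : ℕ → Bool) :
    (myA β x).Infinite := Set.infinite_range_of_injective (mySig_inj β hβ x)

lemma myA_ad (β : ℕ → ℕ) (hβ : Function.Injective β) {x y : ℕ → Bool} (hxy : x ≠ y) :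
    (myA β x ∩ myA β y).Finite := by
  obtain ⟨N, hN⟩ := Function.ne_iff.mp hxy
  apply Set.Finite.subset ((Set.finite_Iic N).image (mySig β x))
  rintro a ⟨⟨n, rfl⟩, ⟨m, hm⟩⟩
  obtain ⟨hnm, hl⟩ := mySig_eq β hβ hm.symm
  subst hnm
  refine ⟨n, ?_, rfl⟩
  simp only [Set.mem_Iic]
  by_contra hn
  push_neg at hn
  have := congrArg (fun l => l[N]?) hl
  simp [hn] at this
  exact hN this

end Aux


section Aux2

lemma mem_cISub_iff (I : Set (Set ℕ)) (hI : IsIdeal I) (f : BoundedContinuousFunction ℕ ℝ) :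
    f ∈ cISub I hI ↔ ∃ y : ℝ, ∀ ε : ℝ, 0 < ε → {n | ε ≤ |f n - y|} ∈ I := Iff.rfl

/-- evaluation at a coordinate as a linear map on cISub -/
def evMap (I : Set (Set ℕ)) (hI : IsIdeal I) (n : ℕ) : cISub I hI →ₗ[ℝ] ℝ where
  toFun f := (f : BoundedContinuousFunction ℕ ℝ) n
  map_add' f g := by simp
  map_smul' c f := by simp

lemma ind_apply (X : Set ℕ) (n : ℕ) : ind X n = X.indicator 1 n := rfl

lemma norm_cISub (I : Set (Set ℕ)) (hI : IsIdeal I) (f : cISub I hI) :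
    ‖f‖ = ‖(f : BoundedContinuousFunction ℕ ℝ)‖ := rfl

lemma abs_evMap_le (I : Set (Set ℕ)) (hI : IsIdeal I) (n : ℕ) (f : cISub I hI) :
    |evMap I hI n f| ≤ ‖f‖ := by
  have := BoundedContinuousFunction.norm_coe_le_norm (f : BoundedContinuousFunction ℕ ℝ) n
  simpa [evMap, Real.norm_eq_abs, norm_cISub] using this

lemma myBound (s : Submodule ℝ (BoundedContinuousFunction ℕ ℝ)) (H : s →L[ℝ] s) :
    ∃ C : ℝ, 0 < C ∧ ∀ x : s, ‖(H x : BoundedContinuousFunction ℕ ℝ)‖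
      ≤ C * ‖(x : BoundedContinuousFunction ℕ ℝ)‖ := by
  set φ : s → BoundedContinuousFunction ℕ ℝ := fun f => (H f : BoundedContinuousFunction ℕ ℝ)
    with hφ
  have hφc : Continuous φ := continuous_subtype_val.comp H.continuous
  have h0 : φ 0 = 0 := by simp [hφ]
  have htd : Tendsto φ (nhds 0) (nhds 0) := by
    have := hφc.continuousAt (x := 0)
    rwa [ContinuousAt, h0] at this
  rw [Metric.tendsto_nhds] at htd
  have h1 : {f : s | dist (φ f) 0 < 1} ∈ nhds (0 : s) := htd 1 one_pos
  rw [nhds_subtype, Filter.mem_comap] at h1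
  obtain ⟨U, hU, hUsub⟩ := h1
  rw [Metric.mem_nhds_iff] at hU
  obtain ⟨δ, hδ, hball⟩ := hU
  have key : ∀ x : s, ‖(x : BoundedContinuousFunction ℕ ℝ)‖ < δ → ‖φ x‖ < 1 := by
    intro x hx
    have : (x : BoundedContinuousFunction ℕ ℝ) ∈ U := by
      apply hball
      simpa [Metric.mem_ball, dist_zero_right] using hx
    have := hUsub this
    simpa [dist_zero_right] using this
  refine ⟨2/δ, by positivity, fun x => ?_⟩
  by_cases hx0 : ‖(x : BoundedContinuousFunction ℕ ℝ)‖ = 0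
  · have hx : x = 0 := Subtype.ext (norm_eq_zero.mp hx0)
    rw [hx, map_zero]
    simp
  · have hr : 0 < ‖(x : BoundedContinuousFunction ℕ ℝ)‖ :=
      lt_of_le_of_ne (norm_nonneg _) (Ne.symm hx0)
    set c : ℝ := δ / (2 * ‖(x : BoundedContinuousFunction ℕ ℝ)‖) with hc
    have hcpos : 0 < c := by positivity
    have hnorm : ‖((c • x : s) : BoundedContinuousFunction ℕ ℝ)‖ < δ := by
      rw [Submodule.coe_smul, norm_smul, Real.norm_eq_abs, abs_of_pos hcpos, hc]
      rw [div_mul_eq_mul_div, mul_comm]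
      rw [div_lt_iff₀ (by positivity)]
      nlinarith
    have hlt := key (c • x) hnorm
    have hsmul : φ (c • x) = c • φ x := by
      simp only [hφ]
      rw [map_smul]
      simp
    have heq : ‖φ (c • x)‖ = c * ‖φ x‖ := by
      rw [hsmul]
      have := norm_smul c (φ x)
      rw [this, Real.norm_eq_abs, abs_of_pos hcpos]
    rw [heq] at hlt
    have hfin : ‖φ x‖ < 1 / c := by
      rw [lt_div_iff₀ hcpos]
      linarith
    have h1c : 1 / c = 2 * ‖(x : BoundedContinuousFunction ℕ ℝ)‖ / δ := by
      rw [hc]; field_simp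
    have hring : 2 * ‖(x : BoundedContinuousFunction ℕ ℝ)‖ / δ
        = 2/δ * ‖(x : BoundedContinuousFunction ℕ ℝ)‖ := by ring
    have hres : ‖φ x‖ ≤ 2/δ * ‖(x : BoundedContinuousFunction ℕ ℝ)‖ := by
      rw [h1c, hring] at hfin; linarith
    simpa [hφ] using hres

end Aux2


set_option maxHeartbeats 1000000 in
lemma myMain (I : Set (Set ℕ)) (hI : IsIdeal I)
    (H : cISub I hI →L[ℝ] cISub I hI)
    (hconv : ∀ x : cISub I hI, IsConv (H x : BoundedContinuousFunction ℕ ℝ))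
    (hfix : ∀ x : cISub I hI, IsConv (x : BoundedContinuousFunction ℕ ℝ) → H x = x)
    (B : Set ℕ) (hB : B ∈ I) (hBinf : B.Infinite) : False := by
  classical
  set β : ℕ → ℕ := fun n => (((Set.Infinite.natEmbedding B hBinf) n : B) : ℕ) with hβdef
  have hβinj : Function.Injective β := fun n m h => (Set.Infinite.natEmbedding B hBinf).injective (Subtype.ext h)
  have hβB : ∀ n, β n ∈ B := fun n => ((Set.Infinite.natEmbedding B hBinf) n).2
  have hAB : ∀ x : ℕ → Bool, myA β x ⊆ B := by rintro x a ⟨n, rfl⟩; exact hβB _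
  have memc : ∀ f : BoundedContinuousFunction ℕ ℝ, (∀ n, n ∉ B → f n = 0) → f ∈ cISub I hI := by
    intro f hf
    refine ⟨0, fun ε hε => hI.1 B _ hB ?_⟩
    intro n hn
    simp only [Set.mem_setOf_eq, sub_zero] at hn
    by_contra hnB
    rw [hf n hnB] at hn
    simp at hn; linarith
  have indmem : ∀ x : ℕ → Bool, ind (myA β x) ∈ cISub I hI := by
    intro x
    refine memc _ fun n hn => ?_
    rw [ind_apply, Set.indicator_of_notMem (fun hmem => hn (hAB x hmem))]
  set mk : (ℕ → Bool) → cISub I hI := fun x => ⟨ind (myA β x), indmem x⟩ with hmk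
  obtain ⟨C0, hC0pos, hC0⟩ := myBound (cISub I hI) H
  set D : ℝ := 1 + C0 with hDdef
  have hD0 : (0:ℝ) ≤ D := by positivity
  set L : cISub I hI → cISub I hI := fun f => f - H f with hLdef
  have hL0 : ∀ f : cISub I hI, IsConv (f : BoundedContinuousFunction ℕ ℝ) → L f = 0 := by
    intro f hf
    have := hfix f hf
    simp only [hLdef, this]
    exact sub_self f
  have hLnorm : ∀ f : cISub I hI, ‖L f‖ ≤ D * ‖f‖ := by
    intro f
    have h1 : ((L f : cISub I hI) : BoundedContinuousFunction ℕ ℝ)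
        = (f : BoundedContinuousFunction ℕ ℝ)
          - ((H f : cISub I hI) : BoundedContinuousFunction ℕ ℝ) := by
      simp [hLdef]
    rw [norm_cISub, h1]
    calc ‖(f : BoundedContinuousFunction ℕ ℝ)
          - ((H f : cISub I hI) : BoundedContinuousFunction ℕ ℝ)‖
        ≤ ‖(f : BoundedContinuousFunction ℕ ℝ)‖
          + ‖((H f : cISub I hI) : BoundedContinuousFunction ℕ ℝ)‖ := norm_sub_le _ _
      _ ≤ ‖(f : BoundedContinuousFunction ℕ ℝ)‖
          + C0 * ‖(f : BoundedContinuousFunction ℕ ℝ)‖ := by linarith [hC0 f]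
      _ = D * ‖f‖ := by rw [norm_cISub, hDdef]; ring
  have hLcoord : ∀ (f : cISub I hI) (n : ℕ), |evMap I hI n (L f)| ≤ D * ‖f‖ :=
    fun f n => le_trans (abs_evMap_le I hI n (L f)) (hLnorm f)
  set ℓv : (ℕ → Bool) → ℕ → ℝ := fun x n => evMap I hI n (L (mk x)) with hℓv
  -- finiteness of the bad sets
  have hfin : ∀ n₀ k : ℕ, {x : ℕ → Bool | 1/((k:ℝ)+1) ≤ |ℓv x n₀|}.Finite := by
    intro n₀ k
    by_contra hSfin
    have hSinf : Set.Infinite {x : ℕ → Bool | 1/((k:ℝ)+1) ≤ |ℓv x n₀|} := hSfin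
    obtain ⟨t, htS, htcard⟩ := hSinf.exists_subset_card_eq ((k+1) * (⌈D⌉₊ + 1))
    set e : (ℕ → Bool) → ℝ := fun x => if 0 ≤ ℓv x n₀ then 1 else -1 with he
    have heabs : ∀ x, e x * ℓv x n₀ = |ℓv x n₀| := by
      intro x
      by_cases h : 0 ≤ ℓv x n₀
      · simp [he, h, abs_of_nonneg h]
      · simp [he, h, abs_of_neg (lt_of_not_ge h)]
    set g : cISub I hI := ∑ x ∈ t, e x • mk x with hg
    have hgcoord : ∀ n, (g : BoundedContinuousFunction ℕ ℝ) n
        = ∑ x ∈ t, e x * (myA β x).indicator 1 n := by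
      intro n
      calc (g : BoundedContinuousFunction ℕ ℝ) n = evMap I hI n g := rfl
        _ = ∑ x ∈ t, evMap I hI n (e x • mk x) := by rw [hg, map_sum]
        _ = ∑ x ∈ t, e x * (myA β x).indicator 1 n := by
            refine Finset.sum_congr rfl fun x hx => ?_
            rw [map_smul]
            simp [evMap, hmk, ind_apply]
    set F : Set ℕ := ⋃ x ∈ t, ⋃ y ∈ t, if x = y then (∅ : Set ℕ) else myA β x ∩ myA β y with hF
    have hFfin : F.Finite := by
      apply Set.Finite.biUnion t.finite_toSet
      intro x _
      apply Set.Finite.biUnion t.finite_toSet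
      intro y _
      by_cases hxy : x = y
      · rw [if_pos hxy]; exact Set.finite_empty
      · rw [if_neg hxy]; exact myA_ad β hβinj hxy
    have hmemF : ∀ {x y : ℕ → Bool}, x ∈ t → y ∈ t → x ≠ y → ∀ {n : ℕ},
        n ∈ myA β x → n ∈ myA β y → n ∈ F := by
      intro x y hx hy hne n hnx hny
      refine Set.mem_biUnion hx (Set.mem_biUnion hy ?_)
      rw [if_neg hne]; exact ⟨hnx, hny⟩
    have hvbound : ∀ n : ℕ, ‖F.indicator (fun m => (g : BoundedContinuousFunction ℕ ℝ) m) n‖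
        ≤ ‖(g : BoundedContinuousFunction ℕ ℝ)‖ := by
      intro n
      by_cases h : n ∈ F
      · rw [Set.indicator_of_mem h]
        exact BoundedContinuousFunction.norm_coe_le_norm _ n
      · rw [Set.indicator_of_notMem h]; simp
    set vB := BoundedContinuousFunction.ofNormedAddCommGroupDiscrete
      (F.indicator fun m => (g : BoundedContinuousFunction ℕ ℝ) m)
      ‖(g : BoundedContinuousFunction ℕ ℝ)‖ hvbound with hvBdef
    have hvBa : ∀ n, vB n = F.indicator (fun m => (g : BoundedContinuousFunction ℕ ℝ) m) n :=
      fun n => rfl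
    have hvmem : vB ∈ cISub I hI := by
      refine ⟨0, fun ε hε => hI.1 F _ (hI.2.2.1 F hFfin) ?_⟩
      intro n hn
      simp only [Set.mem_setOf_eq, sub_zero] at hn
      by_contra hnF
      rw [hvBa, Set.indicator_of_notMem hnF] at hn
      simp at hn; linarith
    have hvconv : IsConv vB := by
      refine ⟨0, ?_⟩
      have hev : ∀ᶠ n in atTop, n ∉ F := by
        rw [← Nat.cofinite_eq_atTop]; exact Set.Finite.eventually_cofinite_notMem hFfin
      refine Tendsto.congr' ?_ tendsto_const_nhds
      filter_upwards [hev] with n hn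
      rw [hvBa, Set.indicator_of_notMem hn]
    set v : cISub I hI := ⟨vB, hvmem⟩ with hvdef
    have hLv : L v = 0 := hL0 v hvconv
    set u : cISub I hI := g - v with hu
    have hunorm : ‖u‖ ≤ 1 := by
      rw [norm_cISub]
      rw [BoundedContinuousFunction.norm_le (by norm_num : (0:ℝ) ≤ 1)]
      intro n
      have hcoe : (u : BoundedContinuousFunction ℕ ℝ) n
          = (g : BoundedContinuousFunction ℕ ℝ) n - vB n := by
        simp [hu, hvdef]
      rw [Real.norm_eq_abs, hcoe]
      by_cases hnf : n ∈ F
      · rw [hvBa, Set.indicator_of_mem hnf]; simp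
      · rw [hvBa, Set.indicator_of_notMem hnf, sub_zero, hgcoord n]
        by_cases hex : ∃ x ∈ t, n ∈ myA β x
        · obtain ⟨x₀, hx₀t, hx₀⟩ := hex
          rw [Finset.sum_eq_single x₀]
          · rw [Set.indicator_of_mem hx₀]
            by_cases h : 0 ≤ ℓv x₀ n₀ <;> simp [he, h]
          · intro y hy hne
            have hny : n ∉ myA β y := fun hmem => hnf (hmemF hy hx₀t hne hmem hx₀)
            rw [Set.indicator_of_notMem hny]; ring
          · intro habs; exact absurd hx₀t habs
        · push_neg at hex
          rw [Finset.sum_eq_zero fun x hx => by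
            rw [Set.indicator_of_notMem (hex x hx)]; ring]
          simp
    have hsum : evMap I hI n₀ (L g) = ∑ x ∈ t, |ℓv x n₀| := by
      have h1 : L g = ∑ x ∈ t, e x • L (mk x) := by
        have hH : H g = ∑ x ∈ t, e x • H (mk x) := by
          rw [hg, map_sum]
          exact Finset.sum_congr rfl fun x hx => map_smul H (e x) (mk x)
        have hstep : ∀ x ∈ t, e x • L (mk x) = e x • mk x - e x • H (mk x) := by
          intro x hx
          simp only [hLdef]
          exact smul_sub (e x) (mk x) (H (mk x))
        rw [Finset.sum_congr rfl hstep]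
        calc L g = g - H g := rfl
          _ = (∑ x ∈ t, e x • mk x) - ∑ x ∈ t, e x • H (mk x) := by rw [hH, hg]
          _ = ∑ x ∈ t, (e x • mk x - e x • H (mk x)) :=
              (Finset.sum_sub_distrib (s := t) (f := fun x => e x • mk x)
                (g := fun x => e x • H (mk x))).symm
      rw [h1, map_sum]
      refine Finset.sum_congr rfl fun x hx => ?_
      rw [map_smul]
      simpa [hℓv] using heabs x
    have hlow : ∀ x ∈ t, 1/((k:ℝ)+1) ≤ |ℓv x n₀| := fun x hx => htS hx
    have hge : (t.card : ℝ) * (1/((k:ℝ)+1)) ≤ evMap I hI n₀ (L g) := by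
      rw [hsum]
      have := Finset.card_nsmul_le_sum t (fun x => |ℓv x n₀|) (1/((k:ℝ)+1)) hlow
      simpa [nsmul_eq_mul] using this
    have hLg : L g = L u := by
      have h2 : H u = H g - H v := by rw [hu]; exact map_sub H g v
      have h3 : L u = L g - L v := by
        rw [hLdef]
        simp only [h2]
        simp only [hu]
        abel
      rw [h3, hLv]
      exact (sub_zero (L g)).symm
    have hpos : 0 ≤ evMap I hI n₀ (L g) := by rw [hsum]; positivity
    have hub : evMap I hI n₀ (L g) ≤ D := by
      rw [← abs_of_nonneg hpos, hLg]
      calc |evMap I hI n₀ (L u)| ≤ D * ‖u‖ := hLcoord u n₀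
        _ ≤ D * 1 := mul_le_mul_of_nonneg_left hunorm hD0
        _ = D := mul_one _
    have hceil : D ≤ (⌈D⌉₊ : ℝ) := Nat.le_ceil _
    have hcard : (t.card : ℝ) = ((k:ℝ)+1) * ((⌈D⌉₊ : ℝ) + 1) := by
      rw [htcard]; push_cast; ring
    have hk1 : (0:ℝ) < (k:ℝ)+1 := by positivity
    rw [hcard] at hge
    have : ((⌈D⌉₊ : ℝ) + 1) ≤ evMap I hI n₀ (L g) := by
      have heq : ((k:ℝ)+1) * ((⌈D⌉₊ : ℝ) + 1) * (1/((k:ℝ)+1)) = (⌈D⌉₊ : ℝ) + 1 := by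
        field_simp
      linarith [hge, heq.symm.le, heq.le]
    linarith
  -- countable union argument
  have hcsub : {x : ℕ → Bool | L (mk x) ≠ 0} ⊆
      ⋃ p : ℕ × ℕ, {x : ℕ → Bool | 1/((p.2:ℝ)+1) ≤ |ℓv x p.1|} := by
    intro x hx
    have hne : ∃ n, ℓv x n ≠ 0 := by
      by_contra hc
      push_neg at hc
      apply hx
      have : ((L (mk x) : cISub I hI) : BoundedContinuousFunction ℕ ℝ) = 0 := by
        ext n
        exact hc n
      exact Subtype.ext this
    obtain ⟨n, hn⟩ := hne
    have habs : 0 < |ℓv x n| := abs_pos.mpr hn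
    obtain ⟨kk, hkk⟩ := exists_nat_gt (1/|ℓv x n|)
    refine Set.mem_iUnion.mpr ⟨(n, kk), ?_⟩
    simp only [Set.mem_setOf_eq]
    rw [div_le_iff₀ (by positivity : (0:ℝ) < (kk:ℝ)+1)]
    have h1 : 1 < (kk:ℝ) * |ℓv x n| := by
      rw [div_lt_iff₀ habs] at hkk
      linarith
    nlinarith [habs]
  have hcount : {x : ℕ → Bool | L (mk x) ≠ 0}.Countable :=
    Set.Countable.mono hcsub
      (Set.countable_iUnion fun p => (hfin p.1 p.2).countable)
  have hex0 : ∃ x : ℕ → Bool, L (mk x) = 0 := by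
    by_contra hc
    push_neg at hc
    have huniv : {x : ℕ → Bool | L (mk x) ≠ 0} = Set.univ := by
      ext x; simp [hc x]
    rw [huniv] at hcount
    exact myNotCountable (Set.countable_univ_iff.mp hcount)
  obtain ⟨x, hx0⟩ := hex0
  have hHfix : H (mk x) = mk x := by
    have h1 : mk x - H (mk x) = 0 := by simpa [hLdef] using hx0
    exact (sub_eq_zero.mp h1).symm
  have hconvx : IsConv (ind (myA β x)) := by
    have := hconv (mk x)
    rw [hHfix] at this
    exact this
  obtain ⟨y, hy⟩ := hconvx
  obtain ⟨N, hN⟩ := Metric.tendsto_atTop.mp hy (1/2) (by norm_num)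
  obtain ⟨n1, hn1A, hn1N⟩ := (myA_infinite β hβinj x).exists_gt N
  have hv1 : ind (myA β x) n1 = 1 := by
    rw [ind_apply, Set.indicator_of_mem hn1A]; rfl
  have hBc : (Bᶜ : Set ℕ).Infinite := by
    by_contra h
    rw [Set.not_infinite] at h
    apply hI.2.2.2
    have huniv : (Set.univ : Set ℕ) = B ∪ Bᶜ := (Set.union_compl_self B).symm
    rw [huniv]
    exact hI.2.1 B hB Bᶜ (hI.2.2.1 _ h)
  obtain ⟨n2, hn2c, hn2N⟩ := hBc.exists_gt N
  have hv0 : ind (myA β x) n2 = 0 := by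
    rw [ind_apply, Set.indicator_of_notMem (fun hmem => hn2c (hAB x hmem))]
  have h1 := hN n1 (le_of_lt hn1N)
  have h2 := hN n2 (le_of_lt hn2N)
  rw [Real.dist_eq, hv1] at h1
  rw [Real.dist_eq, hv0] at h2
  have h1' := abs_lt.mp h1
  have h2' := abs_lt.mp h2
  linarith [h1'.1, h1'.2, h2'.1, h2'.2]

/-- if I admits an uncountable I-mad family, then c is complemented in
c(I) ∩ ℓ∞ iff I = Fin. -/
theorem c_complemented_in_cI_iff (I : Set (Set ℕ)) (hI : IsIdeal I)
    (𝒜 : Set (Set ℕ)) (h𝒜 : IMad I 𝒜) (hunc : ¬ 𝒜.Countable) :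
    (∃ H : cISub I hI →L[ℝ] cISub I hI,
        (∀ x : cISub I hI, IsConv (H x : BoundedContinuousFunction ℕ ℝ)) ∧
        (∀ x : cISub I hI, IsConv (x : BoundedContinuousFunction ℕ ℝ) → H x = x)) ↔
      I = {A : Set ℕ | A.Finite} := by
  constructor
  · rintro ⟨H, hconv, hfix⟩
    ext A
    simp only [Set.mem_setOf_eq]
    constructor
    · intro hA
      by_contra hAfin
      exact myMain I hI H hconv hfix A hA hAfin
    · intro hA
      exact hI.2.2.1 A hA
  · intro hIF
    subst hIF
    refine ⟨ContinuousLinearMap.id ℝ _, ?_, ?_⟩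
    · intro x
      obtain ⟨y, hy⟩ := (mem_cISub_iff _ hI _).mp x.2
      refine ⟨y, Metric.tendsto_atTop.mpr fun ε hε => ?_⟩
      have hfin : {n : ℕ | ε ≤ |(x : BoundedContinuousFunction ℕ ℝ) n - y|}.Finite := hy ε hε
      obtain ⟨N, hN⟩ := hfin.bddAbove
      refine ⟨N+1, fun n hn => ?_⟩
      rw [Real.dist_eq]
      by_contra hcon
      push_neg at hcon
      have hmem : n ∈ {n : ℕ | ε ≤ |(x : BoundedContinuousFunction ℕ ℝ) n - y|} := hcon
      have := hN hmem
      omega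
    · intro x _
      rfl
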